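/- Let n ≥ 3 and let λ₁, …, λₙ be real numbers with λ₁ + ⋯ + λₙ = 0. Writing pₖ = σₖ(λ)/C(n,k), one has p₂² − t·p₃ − t²·p₂ ≥ 0 for every real number t; moreover, if λ is not identically zero, then equality holds for some t if and only if at least n − 1 of the numbers λ₁, …, λₙ are equal to one another. -/

import Mathlib

open Finset

/-- The `k`-th elementary symmetric polynomial of `lam 0, …, lam (n-1)`. -/
noncomputable def esymm {n : ℕ} (k : ℕ) (lam : Fin n → ℝ) : ℝ :=
  ∑ s ∈ (Finset.univ : Finset (Fin n)).powersetCard k, ∏ i ∈ s, lam i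

/-- The normalized elementary symmetric function `p k = σ k / C(n,k)`. -/
noncomputable def p {n : ℕ} (k : ℕ) (lam : Fin n → ℝ) : ℝ :=
  esymm k lam / (n.choose k)

/-!
With `∑ λᵢ = 0`, Newton's identities express `p₂` and `p₃` through the power sums
`S₂ = ∑ λᵢ²` and `S₃ = ∑ λᵢ³`. Since `p₂ ≤ 0`, the quadratic `p₂² - t p₃ - t² p₂` is nonnegative
once its discriminant `p₃² + 4 p₂³` is `≤ 0`, and then has a root exactly when the discriminant
vanishes; in terms of power sums this is `n (n-1) S₃² ≤ (n-2)² S₂³`, resp. equality.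
By Cauchy–Schwarz every coordinate is at most `r`, where `n r² = (n-1) S₂`, so the terms
`((n-1) λᵢ + r)² (r - λᵢ)` are nonnegative; their sum is `(n-1) ((n-2) S₂ r - (n-1) S₃)`.
Together with the same bound for `-λ` this gives `(n-1) |S₃| ≤ (n-2) S₂ r`. In the equality case
every `λᵢ` is `r` or `-r/(n-1)`, and `∑ λᵢ = 0` leaves exactly one coordinate equal to `r`.
-/

theorem exists_nonneg_mul_sq_eq {a b : ℝ} (ha : 0 < a) (hb : 0 ≤ b) :
    ∃ r, 0 ≤ r ∧ a * r ^ 2 = b :=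
  ⟨√(b / a), Real.sqrt_nonneg _, by rw [Real.sq_sqrt (div_nonneg hb ha.le)]; field_simp⟩

theorem Fintype.sum_eq_add_card_pred_nsmul {ι M : Type*} [Fintype ι] [AddCommMonoid M]
    {g : ι → M} {j : ι} {c : M} (h : ∀ i ≠ j, g i = c) :
    ∑ i, g i = g j + (Fintype.card ι - 1) • c := by
  classical
  rw [Fintype.sum_eq_add_sum_compl j,
    sum_eq_card_nsmul (s := {j}ᶜ) fun i hi => h i (by simpa using hi), card_compl, card_singleton]

theorem exists_le_card_filter_eq_iff {ι α : Type*} [Fintype ι] [Nonempty ι] [DecidableEq α]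
    (f : ι → α) :
    (∃ c, Fintype.card ι - 1 ≤ #{i | f i = c}) ↔ ∃ j c, ∀ i ≠ j, f i = c := by
  classical
  constructor
  · rintro ⟨c, hc⟩
    have hne : #{i | ¬f i = c} ≤ 1 := by
      have := card_filter_add_card_filter_not (s := univ) (fun i => f i = c)
      rw [card_univ] at this
      omega
    obtain ⟨j, hj⟩ := card_le_one_iff_subset_singleton.mp hne
    refine ⟨j, c, fun i hi => ?_⟩
    by_contra hfi
    exact hi (mem_singleton.mp (hj (mem_filter.mpr ⟨mem_univ i, hfi⟩)))
  · rintro ⟨j, c, h⟩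
    refine ⟨c, ?_⟩
    calc Fintype.card ι - 1 = #(univ.erase j) := by rw [card_erase_of_mem (mem_univ j), card_univ]
      _ ≤ #{i | f i = c} := card_le_card fun i hi =>
          mem_filter.mpr ⟨mem_univ i, h i (ne_of_mem_erase hi)⟩

section CenteredPowerSums

variable {ι : Type*} [Fintype ι] {x : ι → ℝ} {r : ℝ}

local notation "N" => (Fintype.card ι : ℝ)

theorem sum_sq_pos_of_ne_zero (hx : x ≠ 0) : 0 < ∑ i, x i ^ 2 := by
  obtain ⟨i, hi⟩ := Function.ne_iff.mp hx
  exact (pow_two_pos_of_ne_zero hi).trans_le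
    (single_le_sum (fun j _ => sq_nonneg (x j)) (mem_univ i))

theorem card_mul_sq_le_of_sum_eq_zero (hx : ∑ i, x i = 0) (i : ι) :
    N * x i ^ 2 ≤ (N - 1) * ∑ j, x j ^ 2 := by
  classical
  have : Nonempty ι := ⟨i⟩
  have hcs := sq_sum_le_card_mul_sum_sq (s := univ.erase i) (f := x)
  rw [sum_erase_eq_sub (mem_univ i), sum_erase_eq_sub (mem_univ i), hx,
    card_erase_of_mem (mem_univ i), card_univ, Nat.cast_pred Fintype.card_pos] at hcs
  linarith

theorem le_of_sum_eq_zero_of_card_mul_sq_eq (hx : ∑ i, x i = 0) (hr : 0 ≤ r)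
    (hr2 : N * r ^ 2 = (N - 1) * ∑ j, x j ^ 2) (i : ι) : x i ≤ r := by
  have hN : (0 : ℝ) < N := Nat.cast_pos.mpr (Fintype.card_pos_iff.mpr ⟨i⟩)
  have hsq : x i ^ 2 ≤ r ^ 2 :=
    le_of_mul_le_mul_left (hr2 ▸ card_mul_sq_le_of_sum_eq_zero hx i) hN
  exact (abs_le_of_sq_le_sq' hsq hr).2

theorem sum_sq_mul_sub_eq (hx : ∑ i, x i = 0) (hr2 : N * r ^ 2 = (N - 1) * ∑ j, x j ^ 2) :
    ∑ i, ((N - 1) * x i + r) ^ 2 * (r - x i) =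
      (N - 1) * ((N - 2) * (∑ i, x i ^ 2) * r - (N - 1) * ∑ i, x i ^ 3) := by
  have expand : ∀ i, ((N - 1) * x i + r) ^ 2 * (r - x i) =
      ((N - 1) ^ 2 * r - 2 * (N - 1) * r) * x i ^ 2 - (N - 1) ^ 2 * x i ^ 3
        + (2 * (N - 1) - 1) * r ^ 2 * x i + r ^ 3 := fun i => by ring
  simp only [expand, sum_add_distrib, sum_sub_distrib, ← mul_sum, hx, sum_const, card_univ,
    nsmul_eq_mul, mul_zero]
  linear_combination r * hr2

theorem sum_sq_mul_sub_nonneg (hx : ∑ i, x i = 0) (hr : 0 ≤ r)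
    (hr2 : N * r ^ 2 = (N - 1) * ∑ j, x j ^ 2) (i : ι) :
    0 ≤ ((N - 1) * x i + r) ^ 2 * (r - x i) :=
  mul_nonneg (sq_nonneg _) (sub_nonneg.mpr (le_of_sum_eq_zero_of_card_mul_sq_eq hx hr hr2 i))

theorem sum_cube_le (hι : 1 < Fintype.card ι) (hx : ∑ i, x i = 0) (hr : 0 ≤ r)
    (hr2 : N * r ^ 2 = (N - 1) * ∑ j, x j ^ 2) :
    (N - 1) * ∑ i, x i ^ 3 ≤ (N - 2) * (∑ i, x i ^ 2) * r := by
  have h := sum_nonneg (s := univ) fun i _ => sum_sq_mul_sub_nonneg hx hr hr2 i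
  rw [sum_sq_mul_sub_eq hx hr2] at h
  have hN : (1 : ℝ) < N := by exact_mod_cast hι
  nlinarith

theorem eq_or_eq_of_sum_cube_eq (hx : ∑ i, x i = 0) (hr : 0 ≤ r)
    (hr2 : N * r ^ 2 = (N - 1) * ∑ j, x j ^ 2)
    (heq : (N - 1) * ∑ i, x i ^ 3 = (N - 2) * (∑ i, x i ^ 2) * r) (i : ι) :
    (N - 1) * x i + r = 0 ∨ x i = r := by
  have hzero : ∑ i, ((N - 1) * x i + r) ^ 2 * (r - x i) = 0 := by
    rw [sum_sq_mul_sub_eq hx hr2, heq]; ring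
  have hi := congrFun ((Fintype.sum_eq_zero_iff_of_nonneg
    (sum_sq_mul_sub_nonneg hx hr hr2)).mp hzero) i
  simp only [Pi.zero_apply, mul_eq_zero, pow_eq_zero_iff two_ne_zero, sub_eq_zero] at hi
  exact hi.imp id Eq.symm

theorem abs_sum_cube_le (hι : 1 < Fintype.card ι) (hx : ∑ i, x i = 0) (hr : 0 ≤ r)
    (hr2 : N * r ^ 2 = (N - 1) * ∑ j, x j ^ 2) :
    (N - 1) * |∑ i, x i ^ 3| ≤ (N - 2) * (∑ i, x i ^ 2) * r := by
  have hneg := sum_cube_le (x := -x) hι (by simp [hx]) hr (by simpa using hr2)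
  simp only [Pi.neg_apply, Odd.neg_pow (by decide : Odd 3), even_two.neg_pow,
    sum_neg_distrib] at hneg
  rcases abs_cases (∑ i, x i ^ 3) with ⟨h, _⟩ | ⟨h, _⟩ <;> rw [h]
  · exact sum_cube_le hι hx hr hr2
  · linarith

theorem sum_cube_sq_le (hι : 1 < Fintype.card ι) (hx : ∑ i, x i = 0) :
    N * (N - 1) * (∑ i, x i ^ 3) ^ 2 ≤ (N - 2) ^ 2 * (∑ i, x i ^ 2) ^ 3 := by
  have hN : (1 : ℝ) < N := by exact_mod_cast hι
  have hS2 : 0 ≤ ∑ i, x i ^ 2 := sum_nonneg fun i _ => sq_nonneg (x i)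
  obtain ⟨r, hr, hr2⟩ := exists_nonneg_mul_sq_eq (by linarith : (0 : ℝ) < N)
    (mul_nonneg (by linarith : (0 : ℝ) ≤ N - 1) hS2)
  have h := pow_le_pow_left₀ (by positivity) (abs_sum_cube_le hι hx hr hr2) 2
  rw [mul_pow, sq_abs] at h
  refine le_of_mul_le_mul_left ?_ (sub_pos.mpr hN)
  calc (N - 1) * (N * (N - 1) * (∑ i, x i ^ 3) ^ 2)
      = N * ((N - 1) ^ 2 * (∑ i, x i ^ 3) ^ 2) := by ring
    _ ≤ N * (((N - 2) * (∑ i, x i ^ 2) * r) ^ 2) := by gcongr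
    _ = (N - 1) * ((N - 2) ^ 2 * (∑ i, x i ^ 2) ^ 3) := by
      linear_combination ((N - 2) ^ 2 * (∑ i, x i ^ 2) ^ 2) * hr2

theorem exists_forall_ne_eq_of_forall_eq_or_eq (hι : 1 < Fintype.card ι) (hx : ∑ i, x i = 0)
    (hr : 0 < r) (h : ∀ i, (N - 1) * x i + r = 0 ∨ x i = r) :
    ∃ j c, ∀ i ≠ j, x i = c := by
  classical
  have hN : (1 : ℝ) < N := by exact_mod_cast hι
  have hterm : ∀ i, (N - 1) * x i + r = if x i = r then N * r else 0 := by
    intro i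
    split_ifs with hi
    · rw [hi]; ring
    · exact (h i).resolve_right hi
  have hsum : ∑ i, ((N - 1) * x i + r) = N * r := by
    simp [sum_add_distrib, ← mul_sum, hx]
  rw [sum_congr rfl fun i _ => hterm i, sum_ite, sum_const_zero, sum_const, nsmul_eq_mul,
    add_zero] at hsum
  have hone : #{i | x i = r} = 1 := by
    have := mul_right_cancel₀ (by positivity) (hsum.trans (one_mul _).symm)
    exact_mod_cast this
  obtain ⟨j, hj⟩ := card_eq_one.mp hone
  refine ⟨j, -r / (N - 1), fun i hi => ?_⟩
  have hxi : x i ≠ r := fun hxi => hi (by simpa [hxi] using Finset.ext_iff.mp hj i)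
  rw [eq_div_iff (by linarith)]
  linarith [(h i).resolve_right hxi]

theorem exists_forall_ne_eq_of_sum_cube_sq_eq (hι : 1 < Fintype.card ι) (hx : ∑ i, x i = 0)
    (hx0 : x ≠ 0)
    (heq : N * (N - 1) * (∑ i, x i ^ 3) ^ 2 = (N - 2) ^ 2 * (∑ i, x i ^ 2) ^ 3) :
    ∃ j c, ∀ i ≠ j, x i = c := by
  have hN : (1 : ℝ) < N := by exact_mod_cast hι
  have hS2 := sum_sq_pos_of_ne_zero hx0
  obtain ⟨r, hr, hr2⟩ := exists_nonneg_mul_sq_eq (by linarith : (0 : ℝ) < N)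
    (mul_nonneg (by linarith : (0 : ℝ) ≤ N - 1) hS2.le)
  have hrpos : 0 < r := by
    rcases hr.eq_or_lt with rfl | h
    · nlinarith
    · exact h
  have hsq : ((N - 1) * ∑ i, x i ^ 3) ^ 2 = ((N - 2) * (∑ i, x i ^ 2) * r) ^ 2 := by
    apply mul_left_cancel₀ (by linarith : N ≠ 0)
    linear_combination (N - 1) * heq - ((N - 2) ^ 2 * (∑ i, x i ^ 2) ^ 2) * hr2
  rcases sq_eq_sq_iff_eq_or_eq_neg.mp hsq with h | h
  · exact exists_forall_ne_eq_of_forall_eq_or_eq hι hx hrpos (eq_or_eq_of_sum_cube_eq hx hr hr2 h)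
  · obtain ⟨j, c, hjc⟩ := exists_forall_ne_eq_of_forall_eq_or_eq (x := -x) hι (by simp [hx]) hrpos
      (eq_or_eq_of_sum_cube_eq (by simp [hx]) hr (by simpa using hr2) (by
        simp only [Pi.neg_apply, Odd.neg_pow (by decide : Odd 3), even_two.neg_pow,
          sum_neg_distrib]
        linarith))
    exact ⟨j, -c, fun i hi => by simp [← hjc i hi]⟩

theorem sum_cube_sq_eq_of_forall_ne_eq (hx : ∑ i, x i = 0) {j : ι} {c : ℝ}
    (h : ∀ i ≠ j, x i = c) :
    N * (N - 1) * (∑ i, x i ^ 3) ^ 2 = (N - 2) ^ 2 * (∑ i, x i ^ 2) ^ 3 := by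
  have hsplit : ∀ k : ℕ, ∑ i, x i ^ k = x j ^ k + (N - 1) * c ^ k := by
    intro k
    rw [Fintype.sum_eq_add_card_pred_nsmul fun i hi => by rw [h i hi], nsmul_eq_mul,
      Nat.cast_pred (Fintype.card_pos_iff.mpr ⟨j⟩)]
  have hxj : x j = -(N - 1) * c := by
    have := hsplit 1
    simp only [pow_one, hx] at this
    linarith
  rw [hsplit, hsplit, hxj]
  ring

theorem sum_cube_sq_eq_iff (hι : 1 < Fintype.card ι) (hx : ∑ i, x i = 0) (hx0 : x ≠ 0) :
    N * (N - 1) * (∑ i, x i ^ 3) ^ 2 = (N - 2) ^ 2 * (∑ i, x i ^ 2) ^ 3 ↔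
      ∃ j c, ∀ i ≠ j, x i = c :=
  ⟨exists_forall_ne_eq_of_sum_cube_sq_eq hι hx hx0,
    fun ⟨_, _, h⟩ => sum_cube_sq_eq_of_forall_ne_eq hx h⟩

end CenteredPowerSums

theorem sq_sub_mul_sub_sq_mul_nonneg {a b : ℝ} (ha : a ≤ 0) (hd : b ^ 2 + 4 * a ^ 3 ≤ 0)
    (t : ℝ) : 0 ≤ a ^ 2 - t * b - t ^ 2 * a := by
  rcases ha.lt_or_eq with ha | rfl
  · have h : 0 ≤ -4 * a * (a ^ 2 - t * b - t ^ 2 * a) := by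
      nlinarith [sq_nonneg (2 * a * t + b)]
    exact (mul_nonneg_iff_of_pos_left (by linarith)).mp h
  · have hb : b = 0 := (pow_eq_zero_iff two_ne_zero).mp (le_antisymm (by linarith) (sq_nonneg b))
    simp [hb]

theorem exists_sq_sub_mul_sub_sq_mul_eq_zero_iff {a b : ℝ} (ha : a < 0) :
    (∃ t, a ^ 2 - t * b - t ^ 2 * a = 0) ↔ 0 ≤ b ^ 2 + 4 * a ^ 3 := by
  have hdisc : discrim (-a) (-b) (a ^ 2) = b ^ 2 + 4 * a ^ 3 := by unfold discrim; ring
  have hq : ∀ t, a ^ 2 - t * b - t ^ 2 * a = -a * (t * t) + -b * t + a ^ 2 := fun t => by ring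
  simp only [hq]
  constructor
  · rintro ⟨t, ht⟩
    rw [← hdisc, discrim_eq_sq_of_quadratic_eq_zero ht]
    exact sq_nonneg _
  · intro h
    exact exists_quadratic_eq_zero (neg_ne_zero.mpr ha.ne)
      ⟨√_, hdisc.trans (Real.mul_self_sqrt h).symm⟩

theorem Nat.cast_choose_three {K : Type*} [Field K] [CharZero K] {n : ℕ} (hn : 3 ≤ n) :
    (n.choose 3 : K) = n * (n - 1) * (n - 2) / 6 := by
  obtain ⟨m, rfl⟩ := Nat.exists_eq_add_of_le' hn
  have : (m.factorial : K) ≠ 0 := Nat.cast_ne_zero.mpr m.factorial_ne_zero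
  rw [Nat.cast_choose K hn]
  simp [Nat.factorial_succ]
  field_simp
  ring

section ElementarySymmetric

variable {n : ℕ} {lam : Fin n → ℝ}

theorem esymm_eq_eval (k : ℕ) (lam : Fin n → ℝ) :
    esymm k lam = MvPolynomial.eval lam (MvPolynomial.esymm (Fin n) ℝ k) := by
  simp [MvPolynomial.esymm, esymm]

theorem esymm_two_of_sum_eq_zero (hsum : ∑ i, lam i = 0) :
    esymm 2 lam = -(∑ i, lam i ^ 2) / 2 := by
  have h := congrArg (MvPolynomial.eval lam) (MvPolynomial.mul_esymm_eq_sum (Fin n) ℝ 2)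
  rw [show {a ∈ antidiagonal 2 | a.1 < 2} = {(0, 2), (1, 1)} by decide] at h
  simp [MvPolynomial.psum, MvPolynomial.esymm_one, hsum] at h
  rw [esymm_eq_eval]
  linarith

theorem esymm_three_of_sum_eq_zero (hsum : ∑ i, lam i = 0) :
    esymm 3 lam = (∑ i, lam i ^ 3) / 3 := by
  have h := congrArg (MvPolynomial.eval lam) (MvPolynomial.mul_esymm_eq_sum (Fin n) ℝ 3)
  rw [show {a ∈ antidiagonal 3 | a.1 < 3} = {(0, 3), (1, 2), (2, 1)} by decide] at h
  simp [MvPolynomial.psum, MvPolynomial.esymm_one, hsum] at h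
  rw [esymm_eq_eval]
  linarith

theorem p_two_of_sum_eq_zero (hsum : ∑ i, lam i = 0) :
    p 2 lam = -(∑ i, lam i ^ 2) / (n * (n - 1)) := by
  rw [p, esymm_two_of_sum_eq_zero hsum, Nat.cast_choose_two, div_div_div_comm]
  norm_num

theorem p_two_nonpos_of_sum_eq_zero (hsum : ∑ i, lam i = 0) : p 2 lam ≤ 0 := by
  rw [p, esymm_two_of_sum_eq_zero hsum]
  exact div_nonpos_of_nonpos_of_nonneg
    (div_nonpos_of_nonpos_of_nonneg (neg_nonpos.mpr (sum_nonneg fun i _ => sq_nonneg _)) two_pos.le)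
    (Nat.cast_nonneg _)

theorem p_two_neg_of_sum_eq_zero (hn : 2 ≤ n) (hsum : ∑ i, lam i = 0) (hlam : lam ≠ 0) :
    p 2 lam < 0 := by
  rw [p, esymm_two_of_sum_eq_zero hsum]
  exact div_neg_of_neg_of_pos (div_neg_of_neg_of_pos (neg_neg_of_pos (sum_sq_pos_of_ne_zero hlam))
    two_pos) (Nat.cast_pos.mpr (Nat.choose_pos hn))

theorem p_three_of_sum_eq_zero (hn : 3 ≤ n) (hsum : ∑ i, lam i = 0) :
    p 3 lam = 2 * (∑ i, lam i ^ 3) / (n * (n - 1) * (n - 2)) := by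
  rw [p, esymm_three_of_sum_eq_zero hsum, Nat.cast_choose_three hn, div_div_div_comm]
  ring

theorem p_three_sq_add_four_mul_p_two_cube (hn : 3 ≤ n) (hsum : ∑ i, lam i = 0) :
    p 3 lam ^ 2 + 4 * p 2 lam ^ 3 =
      4 * (n * (n - 1) * (∑ i, lam i ^ 3) ^ 2 - (n - 2) ^ 2 * (∑ i, lam i ^ 2) ^ 3)
        / (n ^ 3 * (n - 1) ^ 3 * (n - 2) ^ 2) := by
  have hn' : (3 : ℝ) ≤ n := by exact_mod_cast hn
  have h1 : (n : ℝ) - 1 ≠ 0 := by linarith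
  have h2 : (n : ℝ) - 2 ≠ 0 := by linarith
  have h0 : (n : ℝ) ≠ 0 := by linarith
  rw [p_two_of_sum_eq_zero hsum, p_three_of_sum_eq_zero hn hsum]
  field_simp
  ring

end ElementarySymmetric

theorem p2_sq_sub_quadratic_nonneg (n : ℕ) (hn : 3 ≤ n) (lam : Fin n → ℝ)
    (hsum : ∑ i, lam i = 0) :
    (∀ t : ℝ, 0 ≤ p 2 lam ^ 2 - t * p 3 lam - t ^ 2 * p 2 lam) ∧
      (lam ≠ 0 →
        ((∃ t : ℝ, p 2 lam ^ 2 - t * p 3 lam - t ^ 2 * p 2 lam = 0) ↔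
          ∃ c : ℝ, n - 1 ≤ (Finset.univ.filter fun i => lam i = c).card)) := by
  have hn' : (3 : ℝ) ≤ n := by exact_mod_cast hn
  have hcard : 1 < Fintype.card (Fin n) := by rw [Fintype.card_fin]; omega
  have hden : (0 : ℝ) < n ^ 3 * (n - 1) ^ 3 * (n - 2) ^ 2 := by
    apply mul_pos (mul_pos ?_ ?_) ?_ <;> apply pow_pos <;> linarith
  have hkey := sum_cube_sq_le hcard hsum
  rw [Fintype.card_fin] at hkey
  have hdisc : p 3 lam ^ 2 + 4 * p 2 lam ^ 3 ≤ 0 := by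
    rw [p_three_sq_add_four_mul_p_two_cube hn hsum]
    exact div_nonpos_of_nonpos_of_nonneg (by linarith) hden.le
  refine ⟨sq_sub_mul_sub_sq_mul_nonneg (p_two_nonpos_of_sum_eq_zero hsum) hdisc, fun hlam => ?_⟩
  have : Nonempty (Fin n) := ⟨⟨0, by omega⟩⟩
  have hequal := sum_cube_sq_eq_iff hcard hsum hlam
  have hcount := exists_le_card_filter_eq_iff lam
  rw [Fintype.card_fin] at hequal hcount
  rw [exists_sq_sub_mul_sub_sq_mul_eq_zero_iff (p_two_neg_of_sum_eq_zero (by omega) hsum hlam),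
    hcount, ← hequal, p_three_sq_add_four_mul_p_two_cube hn hsum, le_div_iff₀ hden]
  constructor <;> intro h <;> linarith
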